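/- Under the hypotheses k_i ≤ n/2 and Σ k_i = n − 1, the quantity C = (2/n)·Σ_{i<j} k_i k_j + (2n−1)/n satisfies C ≥ (n+1)/2. -/

import Mathlib

/-!
Expanding the square gives `2 ∑_{i<j} kᵢ kⱼ = (∑ kᵢ)² - ∑ kᵢ²`, and `0 ≤ kᵢ ≤ n/2` gives
`∑ kᵢ² ≤ (n/2) ∑ kᵢ = n(n-1)/2`. Hence `2 ∑_{i<j} kᵢ kⱼ ≥ (n-1)(n-2)/2`, and
`((n-1)(n-2)/2 + 2n - 1)/n = (n+1)/2`.
-/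

open Finset

theorem sq_sum_eq_sum_sq_add_two_mul_sum_lt {ι R : Type*} [Fintype ι] [LinearOrder ι]
    [CommSemiring R] (f : ι → R) :
    (∑ i, f i) ^ 2 = ∑ i, f i ^ 2 + 2 * ∑ p ∈ univ.filter (fun p : ι × ι => p.1 < p.2), f p.1 * f p.2 := by
  set g : ι × ι → R := fun p => f p.1 * f p.2
  have hswap : ∑ p ∈ univ.filter (fun p : ι × ι => p.2 < p.1), g p =
      ∑ p ∈ univ.filter (fun p : ι × ι => p.1 < p.2), g p :=
    sum_equiv (Equiv.prodComm ι ι) (by simp) (fun _ _ => by simp [g, mul_comm])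
  have hdiag : ∑ p ∈ univ.filter (fun p : ι × ι => p.1 = p.2), g p = ∑ i, f i ^ 2 := by
    simp [sum_filter, Fintype.sum_prod_type, g, sq]
  calc (∑ i, f i) ^ 2 = ∑ p, g p := by rw [sq, Fintype.sum_mul_sum, Fintype.sum_prod_type]
    _ = ∑ p, ((if p.1 < p.2 then g p else 0) + (if p.1 = p.2 then g p else 0)
          + (if p.2 < p.1 then g p else 0)) := by
      refine sum_congr rfl fun p _ => ?_
      rcases lt_trichotomy p.1 p.2 with h | h | h
      · simp [h, h.ne, h.not_gt]
      · simp [h]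
      · simp [h, h.ne', h.not_gt]
    _ = _ := by
      simp only [sum_add_distrib, ← sum_filter, hswap, hdiag]
      ring

theorem sum_sq_le_mul_sum {ι R : Type*} [CommSemiring R] [PartialOrder R] [IsOrderedRing R]
    (s : Finset ι) {f : ι → R} {M : R} (hf0 : ∀ i ∈ s, 0 ≤ f i) (hfM : ∀ i ∈ s, f i ≤ M) :
    ∑ i ∈ s, f i ^ 2 ≤ M * ∑ i ∈ s, f i := by
  rw [mul_sum]
  exact sum_le_sum fun i hi => by
    rw [sq]; exact mul_le_mul_of_nonneg_right (hfM i hi) (hf0 i hi)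

theorem dual_contribution_lower_bound_general (n : ℕ) (t : ℕ)
    (k : Fin t → ℝ) (hk0 : ∀ i, 0 ≤ k i) (hk : ∀ i, k i ≤ (n : ℝ) / 2)
    (hsum : (∑ i, k i) = (n : ℝ) - 1) :
    ((n : ℝ) + 1) / 2 ≤
      (2 / (n : ℝ)) * (∑ p ∈ Finset.univ.filter (fun p : Fin t × Fin t => p.1 < p.2), k p.1 * k p.2)
        + (2 * (n : ℝ) - 1) / (n : ℝ) := by
  have hn : (0 : ℝ) < n := by linarith [hsum ▸ sum_nonneg fun i (_ : i ∈ univ) => hk0 i]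
  have hsq : ∑ i, k i ^ 2 ≤ (n : ℝ) / 2 * (n - 1) :=
    hsum ▸ sum_sq_le_mul_sum univ (fun i _ => hk0 i) (fun i _ => hk i)
  have hpairs := sq_sum_eq_sum_sq_add_two_mul_sum_lt k
  rw [hsum] at hpairs
  rw [div_mul_eq_mul_div, ← add_div, le_div_iff₀ hn]
  linarith

/-- Under the hypotheses `kᵢ ≤ n / 2` and `∑ kᵢ = n - 1`, the quantity
`C = (2/n) · ∑_{i<j} kᵢ kⱼ + (2n - 1)/n` satisfies `C ≥ (n + 1)/2`. -/
theorem dual_contribution_lower_bound (n : ℕ) (hn : 1 ≤ n) (t : ℕ)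
    (k : Fin t → ℝ) (hk0 : ∀ i, 0 ≤ k i) (hk : ∀ i, k i ≤ (n : ℝ) / 2)
    (hsum : (∑ i, k i) = (n : ℝ) - 1) :
    ((n : ℝ) + 1) / 2 ≤
      (2 / (n : ℝ)) * (∑ p ∈ Finset.univ.filter (fun p : Fin t × Fin t => p.1 < p.2), k p.1 * k p.2)
        + (2 * (n : ℝ) - 1) / (n : ℝ) :=
  dual_contribution_lower_bound_general n t k hk0 hk hsum
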